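/- arXiv:math/0703703 — 3 statements merged into one kernel-verified Lean document; each statement's English description precedes it below -/
import Mathlib

section
/- Let p be a prime and let G be a finitely generated group. Then for every n ≥ 1 the quotient G/γ_n^p G is a finite p-group. -/
/-! Common definitions following the paper "Residual p properties of mapping class groups
and surface groups" by L. Paris. -/

/-- The commutator `[g,h] = g⁻¹h⁻¹gh`. -/
def commAB {G : Type*} [Group G] (g h : G) : G := g⁻¹ * h⁻¹ * g * h

/-- The commutator subgroup `[K,H]`, generated by all `[g,h]` with `g ∈ K`, `h ∈ H`. -/
def commSub {G : Type*} [Group G] (K H : Subgroup G) : Subgroup G :=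
  Subgroup.closure {x | ∃ g ∈ K, ∃ h ∈ H, x = commAB g h}

/-- The subgroup `[K,H]^p`, generated by all `[g,h]` (`g ∈ K`, `h ∈ H`) together with all
`h^p` (`h ∈ H`). -/
def pComm (p : ℕ) {G : Type*} [Group G] (K H : Subgroup G) : Subgroup G :=
  Subgroup.closure ({x | ∃ g ∈ K, ∃ h ∈ H, x = commAB g h} ∪ {x | ∃ h ∈ H, x = h ^ p})

/-- The lower `𝔽_p`-linear central filtration: `γ_1^p G = G` and
`γ_{n+1}^p G = [G, γ_n^p G]^p` (with the harmless convention `γ_0^p G = G`). -/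
def gammaP (p : ℕ) (G : Type*) [Group G] : ℕ → Subgroup G
  | 0 => ⊤
  | 1 => ⊤
  | n + 2 => pComm p ⊤ (gammaP p G (n + 1))

theorem pComm_top_normal (p : ℕ) {G : Type*} [Group G] {H : Subgroup G} (hH : H.Normal) :
    (pComm p ⊤ H).Normal := by
  constructor
  intro x hx g
  unfold pComm at hx ⊢
  induction hx using Subgroup.closure_induction with
  | mem y hy =>
    apply Subgroup.subset_closure
    rcases hy with ⟨a, -, h, hh, rfl⟩ | ⟨h, hh, rfl⟩
    · exact Or.inl ⟨g * a * g⁻¹, trivial, g * h * g⁻¹, hH.conj_mem h hh g,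
        by unfold commAB; group⟩
    · exact Or.inr ⟨g * h * g⁻¹, hH.conj_mem h hh g, (conj_pow).symm⟩
  | one => simpa using Subgroup.one_mem _
  | mul a b ha hb iha ihb =>
    have e : g * (a * b) * g⁻¹ = (g * a * g⁻¹) * (g * b * g⁻¹) := by group
    rw [e]; exact Subgroup.mul_mem _ iha ihb
  | inv a ha iha =>
    have e : g * a⁻¹ * g⁻¹ = (g * a * g⁻¹)⁻¹ := by group
    rw [e]; exact Subgroup.inv_mem _ iha

instance gammaP_normal (p : ℕ) (G : Type*) [Group G] : ∀ n, (gammaP p G n).Normal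
  | 0 => by unfold gammaP; infer_instance
  | 1 => by unfold gammaP; infer_instance
  | n + 2 => by unfold gammaP; exact pComm_top_normal p (gammaP_normal p G (n + 1))

/-- `G` is residually `p`: every nontrivial element survives in some finite `p`-group
quotient. -/
def IsResiduallyP (p : ℕ) (G : Type*) [Group G] : Prop :=
  ∀ g : G, g ≠ 1 → ∃ (P : Type) (_ : Group P) (_ : Finite P) (φ : G →* P),
    IsPGroup p P ∧ Function.Surjective φ ∧ φ g ≠ 1

/-- `G` is conjugacy `p`-separable. -/
def IsConjPSeparable (p : ℕ) (G : Type*) [Group G] : Prop :=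
  ∀ g h : G, IsConj g h ∨ ∃ (P : Type) (_ : Group P) (_ : Finite P) (φ : G →* P),
    IsPGroup p P ∧ Function.Surjective φ ∧ ¬ IsConj (φ g) (φ h)

/-- Property A: every automorphism of `G` preserving every conjugacy class is inner. -/
def PropertyA (G : Type*) [Group G] : Prop :=
  ∀ α : MulAut G, (∀ g : G, IsConj g (α g)) → α ∈ (MulAut.conj : G →* MulAut G).range

/-- `A_n`: the kernel of the natural homomorphism `Aut(G) → Aut(G/γ_{n+1}^p G)`, i.e. the
automorphisms acting trivially modulo `γ_{n+1}^p G`. -/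
def An (p : ℕ) (G : Type*) [Group G] (n : ℕ) : Subgroup (MulAut G) where
  carrier := {α | ∀ g : G, g⁻¹ * α g ∈ gammaP p G (n + 1)}
  one_mem' := by intro g; simpa using Subgroup.one_mem _
  mul_mem' := by
    intro a b ha hb g
    have e : g⁻¹ * (a * b) g = (g⁻¹ * b g) * ((b g)⁻¹ * a (b g)) := by
      rw [MulAut.mul_apply]; group
    rw [e]; exact Subgroup.mul_mem _ (hb g) (ha (b g))
  inv_mem' := by
    intro a ha g
    have h := ha ((a⁻¹ : MulAut G) g)
    rw [MulAut.apply_inv_self] at h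
    have e : g⁻¹ * (a⁻¹ : MulAut G) g = (((a⁻¹ : MulAut G) g)⁻¹ * g)⁻¹ := by group
    rw [e]; exact Subgroup.inv_mem _ h

theorem mem_An {p : ℕ} {G : Type*} [Group G] {n : ℕ} {α : MulAut G} :
    α ∈ An p G n ↔ ∀ g : G, g⁻¹ * α g ∈ gammaP p G (n + 1) := Iff.rfl

/-- `I_p(G)`: the kernel of the natural homomorphism `Aut(G) → Aut(G/γ_2^p G)`. -/
abbrev Ip (p : ℕ) (G : Type*) [Group G] : Subgroup (MulAut G) := An p G 1

/-- `Inn(G)`, viewed as a subgroup of `I_p(G)`. -/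
def InnSub (p : ℕ) (G : Type*) [Group G] : Subgroup (Ip p G) :=
  Subgroup.comap (Ip p G).subtype (MulAut.conj : G →* MulAut G).range

instance innSub_normal (p : ℕ) (G : Type*) [Group G] : (InnSub p G).Normal := by
  constructor
  rintro n hn g
  obtain ⟨x, hx⟩ := hn
  refine ⟨(g : MulAut G) x, ?_⟩
  have hx' : MulAut.conj x = (n : MulAut G) := hx
  show MulAut.conj ((g : MulAut G) x) = ((g * n * g⁻¹ : Ip p G) : MulAut G)
  ext y
  simp only [Subgroup.coe_mul, Subgroup.coe_inv, MulAut.mul_apply, MulAut.conj_apply, ← hx',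
    map_mul, map_inv, MulAut.apply_inv_self]

/-- The surface relator `[x_1,y_1][x_2,y_2]⋯[x_ρ,y_ρ]` in the free group on
`x_1, …, x_ρ, y_1, …, y_ρ`. -/
def surfaceRel (ρ : ℕ) : FreeGroup (Fin ρ ⊕ Fin ρ) :=
  (List.ofFn fun i : Fin ρ =>
    commAB (FreeGroup.of (Sum.inl i)) (FreeGroup.of (Sum.inr i))).prod

/-- The fundamental group of the closed oriented surface of genus `ρ`, given by the
presentation `⟨x_1, …, x_ρ, y_1, …, y_ρ | [x_1,y_1]⋯[x_ρ,y_ρ] = 1⟩`. -/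
abbrev SurfaceGroup (ρ : ℕ) : Type :=
  PresentedGroup ({surfaceRel ρ} : Set (FreeGroup (Fin ρ ⊕ Fin ρ)))


/-!
If `H ⊴ G` has finite index in the finitely generated group `G`, then `H` is finitely generated,
and `H / [G, H]^p` is abelian of exponent dividing `p`, hence a finitely generated abelian torsion
group, hence finite. By induction every `γ_n^p G` has finite index. Moreover `g ^ p ^ n` lies in
`γ_{n+1}^p G`, so every element of `G / γ_n^p G` has `p`-power order.
-/

section pComm

variable {p : ℕ} {G : Type*} [Group G]

theorem commAB_mem_pComm {K H : Subgroup G} {g h : G} (hg : g ∈ K) (hh : h ∈ H) :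
    commAB g h ∈ pComm p K H :=
  Subgroup.subset_closure (Or.inl ⟨g, hg, h, hh, rfl⟩)

theorem pow_mem_pComm {K H : Subgroup G} {h : G} (hh : h ∈ H) : h ^ p ∈ pComm p K H :=
  Subgroup.subset_closure (Or.inr ⟨h, hh, rfl⟩)

theorem pComm_top_le {H : Subgroup G} (hH : H.Normal) : pComm p ⊤ H ≤ H := by
  refine (Subgroup.closure_le _).mpr ?_
  rintro x (⟨g, -, h, hh, rfl⟩ | ⟨h, hh, rfl⟩)
  · have hconj : g⁻¹ * h⁻¹ * g ∈ H := by
      simpa using hH.conj_mem h⁻¹ (H.inv_mem hh) g⁻¹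
    exact H.mul_mem hconj hh
  · exact H.pow_mem hh p

end pComm

theorem Subgroup.finiteIndex_of_commAB_mem_of_pow_mem {G : Type*} [Group G] [Group.FG G]
    {p : ℕ} (hp : p ≠ 0) (K : Subgroup G) [K.Normal] (hcomm : ∀ a b : G, commAB a b ∈ K)
    (hpow : ∀ a : G, a ^ p ∈ K) : K.FiniteIndex := by
  let : CommGroup (G ⧸ K) :=
    { mul_comm := by
        intro a b
        induction a using QuotientGroup.induction_on with | H a =>
        induction b using QuotientGroup.induction_on with | H b =>
        rw [← QuotientGroup.mk_mul, ← QuotientGroup.mk_mul, QuotientGroup.eq]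
        simpa [commAB, mul_assoc] using hcomm b a }
  have : Group.FG (G ⧸ K) := Group.fg_of_surjective (QuotientGroup.mk'_surjective K)
  have htorsion : IsMulTorsion (G ⧸ K) := by
    intro a
    induction a using QuotientGroup.induction_on with | H a =>
    refine isOfFinOrder_iff_pow_eq_one.mpr ⟨p, Nat.pos_of_ne_zero hp, ?_⟩
    rw [← QuotientGroup.mk_pow, QuotientGroup.eq_one_iff]
    exact hpow a
  have := CommGroup.finite_of_fg_isMulTorsion (G ⧸ K) htorsion
  exact Subgroup.finiteIndex_of_finite_quotient

theorem pComm_top_finiteIndex {p : ℕ} (hp : p ≠ 0) {G : Type*} [Group G] [Group.FG G]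
    (H : Subgroup G) [H.Normal] [H.FiniteIndex] : (pComm p ⊤ H).FiniteIndex := by
  set K := pComm p ⊤ H
  have : K.Normal := pComm_top_normal p ‹_›
  have : Group.FG H := Subgroup.fg_of_index_ne_zero H
  have : (K.subgroupOf H).FiniteIndex :=
    (K.subgroupOf H).finiteIndex_of_commAB_mem_of_pow_mem hp
      (fun a b => by simpa [Subgroup.mem_subgroupOf, commAB] using
        commAB_mem_pComm (p := p) (Subgroup.mem_top (a : G)) b.2)
      (fun a => by simpa [Subgroup.mem_subgroupOf] using pow_mem_pComm (p := p) (K := ⊤) a.2)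
  rw [Subgroup.finiteIndex_iff, ← Subgroup.relIndex_mul_index (pComm_top_le ‹_›)]
  exact mul_ne_zero (Subgroup.finiteIndex_iff.mp this) Subgroup.FiniteIndex.index_ne_zero

theorem gammaP_finiteIndex {p : ℕ} (hp : p ≠ 0) (G : Type*) [Group G] [Group.FG G] :
    ∀ n, (gammaP p G n).FiniteIndex
  | 0 | 1 => by rw [gammaP]; infer_instance
  | n + 2 => by
    have := gammaP_finiteIndex hp G (n + 1)
    exact pComm_top_finiteIndex hp _

theorem pow_pow_mem_gammaP_succ (p : ℕ) {G : Type*} [Group G] (g : G) :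
    ∀ n, g ^ p ^ n ∈ gammaP p G (n + 1)
  | 0 => by simp [gammaP]
  | n + 1 => by
    rw [pow_succ, pow_mul]
    exact pow_mem_pComm (pow_pow_mem_gammaP_succ p g n)

theorem isPGroup_quotient_gammaP (p : ℕ) (G : Type*) [Group G] :
    ∀ n, IsPGroup p (G ⧸ gammaP p G n)
  | 0 => fun q => ⟨0, Subsingleton.elim (h := QuotientGroup.subsingleton_quotient_top) _ _⟩
  | n + 1 => fun q => by
    induction q using QuotientGroup.induction_on with | H g =>
    exact ⟨n, (QuotientGroup.eq_one_iff _).mpr (pow_pow_mem_gammaP_succ p g n)⟩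

theorem quotient_gammaP_finite_pGroup_general (p : ℕ) (hp : p.Prime) (G : Type*) [Group G]
    (hfg : Group.FG G) (n : ℕ) :
    Finite (G ⧸ gammaP p G n) ∧ IsPGroup p (G ⧸ gammaP p G n) :=
  have := gammaP_finiteIndex hp.ne_zero G n
  ⟨inferInstance, isPGroup_quotient_gammaP p G n⟩

/-- For a finitely generated group `G`, each quotient `G/γ_n^p G` is a finite `p`-group. -/
theorem quotient_gammaP_finite_pGroup (p : ℕ) (hp : p.Prime) (G : Type*) [Group G]
    (hfg : Group.FG G) (n : ℕ) (hn : 1 ≤ n) :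
    Finite (G ⧸ gammaP p G n) ∧ IsPGroup p (G ⧸ gammaP p G n) :=
  quotient_gammaP_finite_pGroup_general p hp G hfg n
end

section
/- Let p be a prime and let G be a finitely generated group. If G is conjugacy p-separable and has Property A, then 𝓘_p(G) = I_p(G)/Inn(G) is residually p, where I_p(G) is the kernel of the natural homomorphism Aut(G) → Aut(G/γ_2^p G) and Inn(G) is the group of inner automorphisms of G. -/
/-!
Let `α ∈ I_p(G)` be non-inner. Property A gives `g` with `α g` not conjugate to `g`, and conjugacy
`p`-separability a finite `p`-group quotient `φ : G → P` keeping them non-conjugate. Since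
`γ_m^p P = 1` for some `m`, the characteristic subgroup `N = γ_m^p G` lies in `ker φ`; it has finite
index because the factors `γ_n^p / γ_{n+1}^p` are finitely generated, abelian and of exponent `p`.
An automorphism acting trivially on `G / γ_2^p G` acts trivially on every factor
`γ_n^p / γ_{n+1}^p` (this uses `⁅γ_i^p, γ_j^p⁆ ≤ γ_{i+j}^p`), so its `p`-th power acts trivially
one level deeper; hence `I_p(G/N)` is a finite `p`-group. The map `I_p(G) → I_p(G/N)` then
induces a homomorphism from `𝓘_p(G)` onto a finite `p`-group in which the class of `α` survives,
because `φ` factors through `G/N`.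
-/

open Subgroup
open scoped commutatorElement

section Commutator

variable {G : Type*} [Group G]

theorem commutatorElement_mul_right_of_commute {a b c : G} (h : Commute a c) :
    ⁅a, b * c⁆ = ⁅a, b⁆ := by
  simp only [commutatorElement_def, mul_inv_rev, ← mul_assoc]
  rw [mul_assoc (a * b) c a⁻¹, ← h.inv_left.eq]
  group

theorem commutatorElement_mul_left_of_commute {a b c : G} (h : Commute c b) :
    ⁅a * c, b⁆ = ⁅a, b⁆ := by
  rw [commutatorElement_def, commutatorElement_def, mul_inv_rev, mul_assoc a c b, h.eq]
  group

theorem commutatorElement_pow_right_of_commute {a b : G} (h : Commute ⁅a, b⁆ b) (n : ℕ) :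
    ⁅a, b ^ n⁆ = ⁅a, b⁆ ^ n := by
  have hconj : a * b * a⁻¹ = ⁅a, b⁆ * b := by rw [commutatorElement_def]; group
  rw [commutatorElement_def a (b ^ n), ← conj_pow, hconj, h.mul_pow, mul_inv_cancel_right]

theorem QuotientGroup.mk_commutatorElement {N : Subgroup G} [N.Normal] (x y : G) :
    ((⁅x, y⁆ : G) : G ⧸ N) = ⁅(x : G ⧸ N), (y : G ⧸ N)⁆ :=
  map_commutatorElement (QuotientGroup.mk' N) x y

theorem QuotientGroup.commute_mk_iff {N : Subgroup G} [N.Normal] {x y : G} :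
    Commute (x : G ⧸ N) (y : G ⧸ N) ↔ ⁅x, y⁆ ∈ N := by
  rw [← commutatorElement_eq_one_iff_commute, ← QuotientGroup.mk_commutatorElement,
    QuotientGroup.eq_one_iff]

namespace Subgroup

variable {H H₁ H₂ H₃ K N : Subgroup G} [N.Normal]

theorem le_normal_iff_map_mk'_eq_bot : H ≤ N ↔ H.map (QuotientGroup.mk' N) = ⊥ := by
  rw [map_eq_bot_iff, QuotientGroup.ker_mk']

theorem commutator_commutator_le_of_rotate (h₁ : ⁅⁅H₂, H₃⁆, H₁⁆ ≤ N)
    (h₂ : ⁅⁅H₃, H₁⁆, H₂⁆ ≤ N) : ⁅⁅H₁, H₂⁆, H₃⁆ ≤ N := by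
  simp only [le_normal_iff_map_mk'_eq_bot, map_commutator] at h₁ h₂ ⊢
  exact commutator_commutator_eq_bot_of_rotate h₁ h₂

theorem commutator_le_iff_le_comap_centralizer :
    ⁅H, K⁆ ≤ N ↔ K ≤ (centralizer (H.map (QuotientGroup.mk' N))).comap (QuotientGroup.mk' N) := by
  rw [commutator_comm, le_normal_iff_map_mk'_eq_bot, map_commutator,
    commutator_eq_bot_iff_le_centralizer, map_le_iff_le_comap]

theorem mem_comap_centralizer_map_mk'_iff {x : G} :
    x ∈ (centralizer (H.map (QuotientGroup.mk' N))).comap (QuotientGroup.mk' N) ↔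
      ∀ h ∈ H, Commute (h : G ⧸ N) (x : G ⧸ N) := by
  simp only [mem_comap, mem_centralizer_iff, coe_map, Set.forall_mem_image,
    QuotientGroup.mk'_apply]
  rfl

end Subgroup

end Commutator

section GammaP

variable {p : ℕ} {G : Type*} [Group G]

theorem gammaP_add_two (n : ℕ) :
    gammaP p G (n + 2) =
      ⁅(⊤ : Subgroup G), gammaP p G (n + 1)⁆ ⊔ closure ((· ^ p) '' gammaP p G (n + 1)) := by
  show pComm p ⊤ _ = _
  rw [pComm, Subgroup.closure_union, Subgroup.commutator_def]
  congr 2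
  · ext x
    constructor <;> rintro ⟨g, -, h, hh, rfl⟩ <;>
      exact ⟨g⁻¹, trivial, h⁻¹, inv_mem hh, by rw [commAB, commutatorElement_def]; group⟩
  · ext x
    exact exists_congr fun h => and_congr_right' eq_comm

theorem commutator_top_gammaP_le (n : ℕ) :
    ⁅(⊤ : Subgroup G), gammaP p G (n + 1)⁆ ≤ gammaP p G (n + 2) :=
  le_sup_left.trans (gammaP_add_two n).ge

theorem commutator_gammaP_top_le (n : ℕ) :
    ⁅gammaP p G (n + 1), (⊤ : Subgroup G)⁆ ≤ gammaP p G (n + 2) :=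
  commutator_comm (G := G) ⊤ _ ▸ commutator_top_gammaP_le n

theorem pow_mem_gammaP {n : ℕ} {h : G} (hh : h ∈ gammaP p G (n + 1)) :
    h ^ p ∈ gammaP p G (n + 2) :=
  (gammaP_add_two n).ge (mem_sup_right (subset_closure ⟨h, hh, rfl⟩))

theorem gammaP_add_two_le {n : ℕ} {K : Subgroup G}
    (hcomm : ⁅(⊤ : Subgroup G), gammaP p G (n + 1)⁆ ≤ K)
    (hpow : ∀ h ∈ gammaP p G (n + 1), h ^ p ∈ K) : gammaP p G (n + 2) ≤ K := by
  rw [gammaP_add_two, sup_le_iff, closure_le]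
  exact ⟨hcomm, by rintro _ ⟨h, hh, rfl⟩; exact hpow h hh⟩

theorem gammaP_antitone : Antitone (gammaP p G) :=
  antitone_nat_of_succ_le fun
    | 0 => le_top
    | _ + 1 => gammaP_add_two_le (commutator_le_right _ _) fun _ hh => pow_mem hh p

theorem map_gammaP {P : Type*} [Group P] {φ : G →* P} (hφ : Function.Surjective φ) :
    ∀ n, (gammaP p G n).map φ = gammaP p P n
  | 0 | 1 => map_top_of_surjective φ hφ
  | n + 2 => by
    rw [gammaP_add_two, gammaP_add_two, Subgroup.map_sup, map_commutator,
      map_top_of_surjective φ hφ, MonoidHom.map_closure, ← map_gammaP hφ (n + 1), coe_map,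
      Set.image_image, Set.image_image]
    simp only [map_pow]

instance gammaP_characteristic (n : ℕ) : (gammaP p G n).Characteristic :=
  characteristic_iff_map_eq.2 fun φ => map_gammaP φ.surjective n

theorem gammaP_quotient_gammaP_eq_bot (n : ℕ) : gammaP p (G ⧸ gammaP p G n) n = ⊥ := by
  rw [← map_gammaP (QuotientGroup.mk'_surjective _), ← le_normal_iff_map_mk'_eq_bot]

theorem commutator_gammaP_le (i j : ℕ) :
    ⁅gammaP p G (i + 1), gammaP p G (j + 1)⁆ ≤ gammaP p G (i + j + 2) := by
  induction j generalizing i with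
  | zero => exact commutator_gammaP_top_le i
  | succ j ih =>
    show _ ≤ gammaP p G (i + j + 3)
    rw [commutator_le_iff_le_comap_centralizer]
    apply gammaP_add_two_le
    · rw [← commutator_le_iff_le_comap_centralizer, commutator_comm]
      apply commutator_commutator_le_of_rotate
      · rw [commutator_comm (gammaP p G (j + 1))]
        exact (commutator_mono (ih i) le_rfl).trans (commutator_gammaP_top_le (i + j + 1))
      · exact (commutator_mono (commutator_gammaP_top_le i) le_rfl).trans
          ((ih (i + 1)).trans (gammaP_antitone (by omega)))
    · intro u hu
      rw [mem_comap_centralizer_map_mk'_iff]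
      intro v hv
      have hvu : ⁅v, u⁆ ∈ gammaP p G (i + j + 2) := ih i (commutator_mem_commutator hv hu)
      have hcentral : Commute ⁅(v : G ⧸ gammaP p G (i + j + 3)), (u : G ⧸ gammaP p G (i + j + 3))⁆
          (u : G ⧸ gammaP p G (i + j + 3)) := by
        rw [← QuotientGroup.mk_commutatorElement, QuotientGroup.commute_mk_iff]
        exact commutator_gammaP_top_le (i + j + 1) (commutator_mem_commutator hvu trivial)
      rw [QuotientGroup.mk_pow, ← commutatorElement_eq_one_iff_commute,
        commutatorElement_pow_right_of_commute hcentral, ← QuotientGroup.mk_commutatorElement,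
        ← QuotientGroup.mk_pow, QuotientGroup.eq_one_iff]
      exact pow_mem_gammaP hvu

theorem commute_mk_of_mem_gammaP {i j k : ℕ} (hk : k ≤ i + j + 2) {x y : G}
    (hx : x ∈ gammaP p G (i + 1)) (hy : y ∈ gammaP p G (j + 1)) :
    Commute (x : G ⧸ gammaP p G k) (y : G ⧸ gammaP p G k) :=
  QuotientGroup.commute_mk_iff.2
    (gammaP_antitone hk (commutator_gammaP_le i j (commutator_mem_commutator hx hy)))

end GammaP

section Stability

variable {p : ℕ} {G : Type*} [Group G]

theorem mem_An_iff_mk {n : ℕ} {α : MulAut G} :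
    α ∈ An p G n ↔ ∀ g : G, (α g : G ⧸ gammaP p G (n + 1)) = g :=
  mem_An.trans <| forall_congr' fun g => by rw [eq_comm, QuotientGroup.eq]

theorem exists_apply_eq_mul_of_mem_An {n : ℕ} {α : MulAut G} (hα : α ∈ An p G n) (g : G) :
    ∃ a ∈ gammaP p G (n + 1), α g = g * a :=
  ⟨g⁻¹ * α g, mem_An.1 hα g, (mul_inv_cancel_left g _).symm⟩

theorem An_antitone : Antitone (An p G) := fun _ _ hkl _ hα g =>
  gammaP_antitone (Nat.succ_le_succ hkl) (mem_An.1 hα g)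

theorem mk_apply_eq_of_mem_Ip {α : MulAut G} (hα : α ∈ Ip p G) (m : ℕ) {h : G}
    (hh : h ∈ gammaP p G (m + 1)) : (α h : G ⧸ gammaP p G (m + 2)) = h := by
  induction m generalizing h with
  | zero => exact mem_An_iff_mk.1 hα h
  | succ m ih =>
    revert h
    show gammaP p G (m + 2) ≤ MonoidHom.eqLocus
      ((QuotientGroup.mk' (gammaP p G (m + 3))).comp α.toMonoidHom) (QuotientGroup.mk' _)
    have hdefect : ∀ u ∈ gammaP p G (m + 1), ∃ b ∈ gammaP p G (m + 2), α u = u * b :=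
      fun u hu => ⟨u⁻¹ * α u, QuotientGroup.eq.1 (ih hu).symm, (mul_inv_cancel_left u _).symm⟩
    apply gammaP_add_two_le
    · rw [commutator_le]
      rintro g - u hu
      obtain ⟨a, ha, hαg⟩ := exists_apply_eq_mul_of_mem_An hα g
      obtain ⟨b, hb, hαu⟩ := hdefect u hu
      have hb_central : Commute ((g * a : G) : G ⧸ gammaP p G (m + 3)) b :=
        commute_mk_of_mem_gammaP (i := 0) (j := m + 1) (by omega) trivial hb
      have ha_comm : Commute (a : G ⧸ gammaP p G (m + 3)) u :=
        commute_mk_of_mem_gammaP (i := 1) (j := m) (by omega) ha hu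
      show ((α ⁅g, u⁆ : G) : G ⧸ gammaP p G (m + 3)) = ⁅g, u⁆
      rw [map_commutatorElement, hαg, hαu, QuotientGroup.mk_commutatorElement,
        QuotientGroup.mk_mul _ u b, commutatorElement_mul_right_of_commute hb_central,
        QuotientGroup.mk_mul, commutatorElement_mul_left_of_commute ha_comm,
        QuotientGroup.mk_commutatorElement]
    · intro u hu
      obtain ⟨b, hb, hαu⟩ := hdefect u hu
      have hb_central : Commute (u : G ⧸ gammaP p G (m + 3)) b :=
        commute_mk_of_mem_gammaP (i := 0) (j := m + 1) (by omega) trivial hb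
      show ((α (u ^ p) : G) : G ⧸ gammaP p G (m + 3)) = (u ^ p : G)
      rw [map_pow, hαu, QuotientGroup.mk_pow, QuotientGroup.mk_mul, hb_central.mul_pow,
        ← QuotientGroup.mk_pow _ b, (QuotientGroup.eq_one_iff _).2 (pow_mem_gammaP hb), mul_one,
        QuotientGroup.mk_pow]

theorem pow_mem_An_add_two {α : MulAut G} {k : ℕ} (hα : α ∈ An p G (k + 1)) :
    α ^ p ∈ An p G (k + 2) := by
  rw [mem_An_iff_mk]
  intro g
  obtain ⟨c, hc, hαg⟩ := exists_apply_eq_mul_of_mem_An hα g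
  have hαI : α ∈ Ip p G := An_antitone (by omega) hα
  have hiterate (n : ℕ) :
      ((α ^ n) g : G ⧸ gammaP p G (k + 3)) = g * (c : G ⧸ gammaP p G (k + 3)) ^ n := by
    induction n with
    | zero => simp
    | succ n ih =>
      rw [pow_succ, MulAut.mul_apply, hαg, map_mul, QuotientGroup.mk_mul, ih,
        mk_apply_eq_of_mem_Ip (pow_mem hαI n) (k + 1) hc, pow_succ, mul_assoc]
  rw [hiterate, ← QuotientGroup.mk_pow, (QuotientGroup.eq_one_iff _).2 (pow_mem_gammaP hc),
    mul_one]

theorem pow_prime_pow_mem_An {α : MulAut G} (hα : α ∈ Ip p G) :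
    ∀ s : ℕ, α ^ p ^ s ∈ An p G (s + 1)
  | 0 => by simpa using hα
  | s + 1 => by
    rw [pow_succ, pow_mul]
    exact pow_mem_An_add_two (pow_prime_pow_mem_An hα s)

theorem isPGroup_Ip_of_gammaP_eq_bot {m : ℕ} (hm : gammaP p G m = ⊥) : IsPGroup p (Ip p G) := by
  intro α
  refine ⟨m, Subtype.ext (MulEquiv.ext fun g => ?_)⟩
  have hmem := gammaP_antitone (by omega : m ≤ m + 2) (mem_An.1 (pow_prime_pow_mem_An α.2 m) g)
  rw [hm, mem_bot, inv_mul_eq_one] at hmem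
  exact hmem.symm

end Stability

section FiniteQuotients

variable {p : ℕ}

/-- Induction on `|P|`: if `z` is central of order `p` and `γ_m^p(P/⟨z⟩) = 1`, then
`γ_m^p(P) ≤ ⟨z⟩`, which is killed by both commutators with `P` and `p`-th powers. -/
theorem exists_gammaP_eq_bot (hp : p.Prime) {P : Type*} [Group P] [Finite P]
    (hP : IsPGroup p P) : ∃ m, gammaP p P m = ⊥ := by
  induction h : Nat.card P using Nat.strong_induction_on generalizing P with | _ n ih => ?_
  rcases subsingleton_or_nontrivial P with _ | _
  · exact ⟨0, Subsingleton.elim _ _⟩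
  have : Fact p.Prime := ⟨hp⟩
  have hdvd : p ∣ Nat.card (center P) :=
    ((hP.to_subgroup _).card_eq_or_dvd).resolve_left
      (Finite.one_lt_card_iff_nontrivial.2 hP.center_nontrivial).ne'
  obtain ⟨z, hz⟩ := exists_prime_orderOf_dvd_card' p hdvd
  set Z := zpowers (z : P)
  have hZcenter : Z ≤ center P := zpowers_le.2 z.2
  have : Z.Normal := ⟨fun x hx g => by
    rwa [mem_center_iff.1 (hZcenter hx) g, mul_inv_cancel_right]⟩
  have hZcard : Nat.card Z = p := by rw [Nat.card_zpowers, orderOf_coe, hz]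
  have hlt : Nat.card (P ⧸ Z) < n := by
    rw [← h, card_eq_card_quotient_mul_card_subgroup Z, hZcard]
    exact lt_mul_of_one_lt_right Nat.card_pos hp.one_lt
  obtain ⟨m, hm⟩ := ih _ hlt (hP.to_quotient Z) rfl
  have hmZ : gammaP p P (m + 1) ≤ Z := by
    rw [← QuotientGroup.ker_mk' Z, ← Subgroup.map_eq_bot_iff,
      map_gammaP (QuotientGroup.mk'_surjective Z), ← le_bot_iff, ← hm]
    exact gammaP_antitone m.le_succ
  refine ⟨m + 2, le_bot_iff.1 (gammaP_add_two_le ?_ fun x hx => ?_)⟩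
  · exact (commutator_mono le_rfl (hmZ.trans hZcenter)).trans
      (commutator_top_left_eq_bot_iff_le_center.2 le_rfl).le
  · have := pow_card_eq_one' (G := Z) (x := ⟨x, hmZ hx⟩)
    rw [hZcard] at this
    exact congrArg Subtype.val this

theorem finite_of_fg_of_commute_of_pow_eq_one {Q : Type*} [Group Q] [Group.FG Q] (hp : 0 < p)
    (hcomm : ∀ a b : Q, Commute a b) (hpow : ∀ a : Q, a ^ p = 1) : Finite Q := by
  let _ : CommGroup Q := { mul_comm := fun a b => hcomm a b }
  exact CommGroup.finite_of_fg_isMulTorsion Q fun a =>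
    isOfFinOrder_iff_pow_eq_one.2 ⟨p, hp, hpow a⟩

theorem finiteIndex_gammaP {G : Type*} [Group G] [Group.FG G] (hp : 0 < p) :
    ∀ n, (gammaP p G n).FiniteIndex
  | 0 | 1 => inferInstanceAs (⊤ : Subgroup G).FiniteIndex
  | n + 2 => by
    have := finiteIndex_gammaP (G := G) hp (n + 1)
    have : Group.FG (gammaP p G (n + 1)) := fg_of_index_ne_zero _
    set H := gammaP p G (n + 1)
    set K := gammaP p G (n + 2)
    have : Finite (H ⧸ K.subgroupOf H) := by
      apply finite_of_fg_of_commute_of_pow_eq_one hp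
      · intro a b
        obtain ⟨a, rfl⟩ := QuotientGroup.mk_surjective a
        obtain ⟨b, rfl⟩ := QuotientGroup.mk_surjective b
        rw [QuotientGroup.commute_mk_iff, mem_subgroupOf]
        exact commutator_top_gammaP_le n (commutator_mem_commutator trivial b.2)
      · intro a
        obtain ⟨a, rfl⟩ := QuotientGroup.mk_surjective a
        rw [← QuotientGroup.mk_pow, QuotientGroup.eq_one_iff, mem_subgroupOf]
        exact pow_mem_gammaP a.2
    constructor
    rw [← relIndex_mul_index (gammaP_antitone n.succ.le_succ)]
    exact mul_ne_zero (index_ne_zero_of_finite : (K.subgroupOf H).index ≠ 0)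
      FiniteIndex.index_ne_zero

end FiniteQuotients

section InducedAutomorphisms

variable {p : ℕ} {G : Type*} [Group G]

def MulAut.quotient (N : Subgroup G) [N.Characteristic] : MulAut G →* MulAut (G ⧸ N) where
  toFun α := QuotientGroup.congr N N α (characteristic_iff_map_eq.1 ‹_› α)
  map_one' := MulEquiv.ext fun z => QuotientGroup.induction_on z fun _ => rfl
  map_mul' _ _ := MulEquiv.ext fun z => QuotientGroup.induction_on z fun _ => rfl

theorem MulAut.quotient_mem_An (N : Subgroup G) [N.Characteristic] {n : ℕ} {α : MulAut G}
    (hα : α ∈ An p G n) : MulAut.quotient N α ∈ An p (G ⧸ N) n := by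
  rw [mem_An]
  intro z
  obtain ⟨g, rfl⟩ := QuotientGroup.mk_surjective z
  rw [← map_gammaP (QuotientGroup.mk'_surjective N)]
  exact ⟨g⁻¹ * α g, mem_An.1 hα g, rfl⟩

variable (p) in
def ipQuotient (N : Subgroup G) [N.Characteristic] : Ip p G →* Ip p (G ⧸ N) :=
  ((MulAut.quotient N).comp (Ip p G).subtype).codRestrict _ fun α =>
    MulAut.quotient_mem_An N α.2

theorem ipQuotient_not_mem_map_innSub {N : Subgroup G} [N.Characteristic] {P : Type*} [Group P]
    {φ : G →* P} (hN : N ≤ φ.ker) {α : Ip p G} {g : G}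
    (hg : ¬IsConj (φ g) (φ ((α : MulAut G) g))) :
    ipQuotient p N α ∉ (InnSub p G).map (ipQuotient p N) := by
  rintro ⟨β, ⟨w, hw⟩, hβα⟩
  have hβg : ((β : MulAut G) g : G ⧸ N) = ((α : MulAut G) g : G ⧸ N) :=
    congrArg (fun γ : Ip p (G ⧸ N) => (γ : MulAut (G ⧸ N)) g) hβα
  have hφ : φ ((β : MulAut G) g) = φ ((α : MulAut G) g) := by
    rw [← inv_mul_eq_one, ← map_inv, ← map_mul]
    exact hN (QuotientGroup.eq.1 hβg)
  apply hg
  rw [← hφ, ← show MulAut.conj w = (β : MulAut G) from hw, MulAut.conj_apply, map_mul, map_mul,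
    map_inv]
  exact isConj_iff.2 ⟨φ w, rfl⟩

end InducedAutomorphisms

theorem QuotientGroup.exists_pGroup_hom_ne_one {p : ℕ} {I H : Type*} [Group I] [Group H]
    [Finite H] (hH : IsPGroup p H) (J : Subgroup I) [J.Normal] (ψ : I →* H) {a : I}
    (ha : ψ a ∉ J.map ψ) :
    ∃ (P : Type) (_ : Group P) (_ : Finite P) (φ : I ⧸ J →* P),
      IsPGroup p P ∧ Function.Surjective φ ∧ φ a ≠ 1 := by
  let K : Subgroup ψ.range := J.map ψ.rangeRestrict
  have : K.Normal := .map ‹_› _ ψ.rangeRestrict_surjective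
  let φ : I ⧸ J →* ψ.range ⧸ K := QuotientGroup.map J K ψ.rangeRestrict (le_comap_map _ _)
  have hφ : Function.Surjective φ :=
    QuotientGroup.map_surjective_of_surjective J K ψ.rangeRestrict
      (QuotientGroup.mk_surjective.comp ψ.rangeRestrict_surjective) _
  have hφa : φ a ≠ 1 := by
    rw [Ne, QuotientGroup.map_mk, QuotientGroup.eq_one_iff]
    rintro ⟨b, hb, hba⟩
    exact ha ⟨b, hb, congrArg Subtype.val hba⟩
  let e : ψ.range ⧸ K ≃* Shrink.{0} (ψ.range ⧸ K) := Shrink.mulEquiv.symm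
  exact ⟨Shrink (ψ.range ⧸ K), inferInstance, Finite.of_equiv _ e.toEquiv, e.toMonoidHom.comp φ,
    ((hH.to_subgroup _).to_quotient K).of_equiv e, e.surjective.comp hφ,
    (map_ne_one_iff e e.injective).2 hφa⟩

/-- **Theorem 1.6 / 2.5.** If `G` is finitely generated, conjugacy `p`-separable and has
Property A, then `𝓘_p(G) = I_p(G)/Inn(G)` is residually `p`. -/
theorem Ip_quotient_Inn_residuallyP (p : ℕ) (hp : p.Prime) (G : Type*) [Group G]
    (hfg : Group.FG G) (hconj : IsConjPSeparable p G) (hA : PropertyA G) :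
    IsResiduallyP p (↥(Ip p G) ⧸ InnSub p G) := by
  intro x hx
  obtain ⟨α, rfl⟩ := QuotientGroup.mk_surjective x
  obtain ⟨g, hg⟩ : ∃ g, ¬IsConj g ((α : MulAut G) g) := by
    by_contra! h
    exact hx ((QuotientGroup.eq_one_iff α).2 (hA _ h))
  obtain hconj_g | ⟨P, _, _, φ, hP, hφ, hφg⟩ := hconj g ((α : MulAut G) g)
  · exact absurd hconj_g hg
  obtain ⟨m, hm⟩ := exists_gammaP_eq_bot hp hP
  have hker : gammaP p G m ≤ φ.ker := by
    rw [← Subgroup.map_eq_bot_iff, map_gammaP hφ, hm]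
  have : (gammaP p G m).FiniteIndex := finiteIndex_gammaP hp.pos m
  exact QuotientGroup.exists_pGroup_hom_ne_one
    (isPGroup_Ip_of_gammaP_eq_bot (gammaP_quotient_gammaP_eq_bot m)) (InnSub p G)
    (ipQuotient p (gammaP p G m)) (ipQuotient_not_mem_map_innSub hker hφg)
end

section
/- Let p be a prime, n ≥ 1, let F = F(x_1, …, x_n, y_1, …, y_n) be the free group of rank 2n, let γ = [x_1,y_1][x_2,y_2]⋯[x_n,y_n], and let C = ⟨γ⟩. Then for every f ∈ F with f ∉ C and every nonzero integer m, the commutator [γ^m, f γ^m f⁻¹] is nontrivial. -/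
open Subgroup

/-!
In a free group two commuting elements generate a free (Nielsen–Schreier) abelian, hence cyclic,
subgroup; so anything commuting with an element `g` that is not a proper power is a power of `g`,
and by torsion-freeness anything commuting with a nonzero power of `g` commutes with `g`.

The relator `γ` is not a proper power: killing all generators but `x₁, y₁` sends it to
`[x₁, y₁]`, whose reduced word has four distinct letters, whereas the reduced word of `c ^ k`
with `k ≥ 2` contains the cyclic reduction of `c` twice.

If `γ ^ m` commutes with `f γ ^ m f⁻¹ = (f γ f⁻¹) ^ m`, then `γ` commutes with
`f γ f⁻¹ = γ ^ r`. Since `γ = (f⁻¹ γ f) ^ r` is not a proper power, `r = ±1`, so `f` or `f²`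
commutes with `γ`; either way `f` commutes with `γ` and hence lies in `⟨γ⟩`.
-/

section Group

variable {G H : Type*} [Group G] [Group H]

theorem commAB_eq_one_iff {g h : G} : commAB g h = 1 ↔ Commute g h := by
  rw [commAB, mul_assoc, mul_assoc, inv_mul_eq_one, eq_inv_mul_iff_mul_eq, commute_iff_eq, eq_comm]

theorem Commute.of_zpow_right [IsMulTorsionFree G] {x y : G} {n : ℤ} (hn : n ≠ 0)
    (h : Commute x (y ^ n)) : Commute x y := by
  have h' : (x * y * x⁻¹) ^ n = y ^ n := by rw [conj_zpow, h.eq, mul_inv_cancel_right]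
  exact mul_inv_eq_iff_eq_mul.1 (zpow_left_injective hn h')

theorem Commute.of_zpow_left [IsMulTorsionFree G] {x y : G} {n : ℤ} (hn : n ≠ 0)
    (h : Commute (x ^ n) y) : Commute x y :=
  (h.symm.of_zpow_right hn).symm

def IsNotProperPower (g : G) : Prop :=
  ∀ (c : G) (k : ℤ), c ^ k = g → k = 1 ∨ k = -1

theorem IsNotProperPower.of_map {g : G} (φ : G →* H) (h : IsNotProperPower (φ g)) :
    IsNotProperPower g :=
  fun c k hck => h (φ c) k (by rw [← map_zpow, hck])

end Group

namespace FreeGroup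

variable {α : Type*}

theorem commute_of_of_iff {a b : α} : Commute (of a) (of b) ↔ a = b := by
  classical
  refine ⟨fun h => ?_, fun h => h ▸ Commute.refl _⟩
  simpa [toWord_mul, reduce.cons] using congrArg (List.head? ∘ toWord) h.eq

theorem isCyclic_of_subsingleton [Subsingleton α] : IsCyclic (FreeGroup α) := by
  obtain ⟨g, hg⟩ : ∃ g : FreeGroup α, Set.range (of (α := α)) ⊆ zpowers g := by
    rcases isEmpty_or_nonempty α with _ | ⟨⟨s⟩⟩
    · exact ⟨1, by simp [Set.range_eq_empty]⟩
    · exact ⟨of s, by rintro _ ⟨a, rfl⟩; rw [Subsingleton.elim a s]; exact mem_zpowers _⟩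
  refine isCyclic_iff_exists_zpowers_eq_top.2 ⟨g, top_unique ?_⟩
  rw [← closure_range_of, closure_le]
  exact hg

end FreeGroup

namespace IsFreeGroup

variable {G : Type*} [Group G] [IsFreeGroup G]

theorem isCyclic_of_isMulCommutative [IsMulCommutative G] : IsCyclic G := by
  let e := toFreeGroup G
  have : Subsingleton (Generators G) := ⟨fun a b => FreeGroup.commute_of_of_iff.1 <| by
    simpa using (show Commute (e.symm (.of a)) (e.symm (.of b)) from mul_comm' _ _).map e⟩
  have := FreeGroup.isCyclic_of_subsingleton (α := Generators G)
  exact isCyclic_of_surjective e.symm e.symm.surjective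

theorem exists_mem_zpowers_of_commute {x y : G} (h : Commute x y) :
    ∃ c : G, x ∈ zpowers c ∧ y ∈ zpowers c := by
  let K := closure ({x, y} : Set G)
  have : IsMulCommutative K := isMulCommutative_closure <| by
    simp only [Set.mem_insert_iff, Set.mem_singleton_iff]
    rintro _ (rfl | rfl) _ (rfl | rfl) <;> first | rfl | exact h.eq | exact h.symm.eq
  obtain ⟨c, hc⟩ := (isCyclic_of_isMulCommutative : IsCyclic K).exists_generator
  have mem {z : G} (hz : z ∈ K) : z ∈ zpowers (c : G) := by
    obtain ⟨k, hk⟩ := mem_zpowers_iff.1 (hc ⟨z, hz⟩)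
    exact mem_zpowers_iff.2 ⟨k, congrArg Subtype.val hk⟩
  exact ⟨c, mem (subset_closure (by simp)), mem (subset_closure (by simp))⟩

end IsFreeGroup

theorem IsNotProperPower.mem_zpowers_of_commute {G : Type*} [Group G] [IsFreeGroup G] {g x : G}
    (hg : IsNotProperPower g) (h : Commute g x) : x ∈ zpowers g := by
  obtain ⟨c, hgc, hxc⟩ := IsFreeGroup.exists_mem_zpowers_of_commute h
  obtain ⟨k, rfl⟩ := mem_zpowers_iff.1 hgc
  rcases hg c k rfl with rfl | rfl
  · simpa using hxc
  · simpa [zpowers_inv] using hxc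

theorem IsNotProperPower.commute_of_commute_conj {α : Type*} {g f : FreeGroup α}
    (hg : IsNotProperPower g) (h : Commute g (f * g * f⁻¹)) : Commute f g := by
  obtain ⟨r, hr⟩ := mem_zpowers_iff.1 (hg.mem_zpowers_of_commute h)
  have hroot : (f⁻¹ * g * f⁻¹⁻¹) ^ r = g := by rw [conj_zpow, hr]; group
  rcases hg _ r hroot with rfl | rfl
  · exact mul_inv_eq_iff_eq_mul.1 (by simpa using hr.symm)
  · have hf : SemiconjBy f g g⁻¹ := by rw [SemiconjBy, ← zpow_neg_one, hr]; group
    have hsq : SemiconjBy (f ^ (2 : ℤ)) g g := by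
      rw [zpow_two]; simpa using hf.inv_right.mul_left hf
    exact Commute.of_zpow_left two_ne_zero hsq

namespace FreeGroup

variable {α : Type*} [DecidableEq α]

open reduceCyclically in
theorem not_nodup_toWord_pow {x : FreeGroup α} (hx : x ≠ 1) {k : ℕ} (hk : 2 ≤ k) :
    ¬ (x ^ k).toWord.Nodup := by
  obtain ⟨j, rfl⟩ := Nat.exists_eq_add_of_le' hk
  have hR : reduceCyclically x.toWord ≠ [] := by
    intro hR
    apply hx
    rw [← mk_toWord (x := x), ← conj_conjugator_reduceCyclically x.toWord, hR, List.append_nil,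
      ← mul_mk, ← inv_mk, mul_inv_cancel]
  rw [toWord_pow, reduce_flatten_replicate isReduced_toWord, if_neg (by omega),
    List.replicate_succ, List.replicate_succ, List.flatten_cons, List.flatten_cons]
  intro hnd
  have hRR := hnd.sublist (l₁ := reduceCyclically x.toWord ++ reduceCyclically x.toWord) (by simp)
  exact hR <| List.eq_nil_iff_forall_not_mem.2 fun a ha =>
    (List.nodup_append.1 hRR).2.2 a ha a ha rfl

theorem isNotProperPower_of_nodup_toWord {g : FreeGroup α} (hg : g ≠ 1) (h : g.toWord.Nodup) :
    IsNotProperPower g := by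
  have exponent_eq_one {c : FreeGroup α} {j : ℕ} (hcj : c ^ j = g) : j = 1 := by
    have hc : c ≠ 1 := by rintro rfl; exact hg (by rw [← hcj, one_pow])
    have hj : j ≠ 0 := by rintro rfl; exact hg (by rw [← hcj, pow_zero])
    by_contra hj1
    exact not_nodup_toWord_pow hc (by omega) (hcj ▸ h)
  intro c k hck
  obtain ⟨j, rfl | rfl⟩ := Int.eq_nat_or_neg k
  · rw [zpow_natCast] at hck
    simp [exponent_eq_one hck]
  · rw [zpow_neg, zpow_natCast, ← inv_pow] at hck
    simp [exponent_eq_one hck]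

theorem toWord_commAB_of_of {a b : α} (hab : a ≠ b) :
    (commAB (of a) (of b)).toWord = [(a, false), (b, false), (a, true), (b, true)] := by
  simp [commAB, toWord_mul, toWord_inv, invRev, reduce.cons, hab, Ne.symm hab]

theorem isNotProperPower_commAB_of_of {a b : α} (hab : a ≠ b) :
    IsNotProperPower (commAB (of a) (of b)) := by
  refine isNotProperPower_of_nodup_toWord ?_ ?_
  · intro h1
    simpa [h1] using toWord_commAB_of_of hab
  · rw [toWord_commAB_of_of hab]
    simp [hab, Ne.symm hab]

end FreeGroup

theorem lift_surfaceRel_succ (n : ℕ) :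
    FreeGroup.lift (Sum.elim (fun i : Fin (n + 1) => if i = 0 then FreeGroup.of false else 1)
      (fun i => if i = 0 then FreeGroup.of true else 1)) (surfaceRel (n + 1)) =
      commAB (FreeGroup.of false) (FreeGroup.of true) := by
  simp [surfaceRel, List.ofFn_succ, commAB, map_list_prod, List.map_ofFn, Function.comp_def]

theorem isNotProperPower_surfaceRel {n : ℕ} (hn : 1 ≤ n) : IsNotProperPower (surfaceRel n) := by
  obtain ⟨n, rfl⟩ := Nat.exists_eq_add_of_le' hn
  have := FreeGroup.isNotProperPower_commAB_of_of Bool.false_ne_true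
  rw [← lift_surfaceRel_succ n] at this
  exact this.of_map _

theorem commutator_conj_ne_one_general (n : ℕ) (hn : 1 ≤ n)
    (f : FreeGroup (Fin n ⊕ Fin n)) (hf : f ∉ Subgroup.zpowers (surfaceRel n))
    (m : ℤ) (hm : m ≠ 0) :
    commAB (surfaceRel n ^ m) (f * surfaceRel n ^ m * f⁻¹) ≠ 1 := by
  have hγ := isNotProperPower_surfaceRel hn
  rw [Ne, commAB_eq_one_iff, ← conj_zpow]
  intro h
  have hconj : Commute (surfaceRel n) (f * surfaceRel n * f⁻¹) :=
    (h.of_zpow_right hm).of_zpow_left hm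
  exact hf (hγ.mem_zpowers_of_commute (hγ.commute_of_commute_conj hconj).symm)

/-- **Claim 1 in the proof of Proposition 4.5.** In the free group `F` of rank `2n` with
`γ = [x_1,y_1]⋯[x_n,y_n]` and `C = ⟨γ⟩`: for `f ∉ C` and `m ≠ 0`, the commutator
`[γ^m, fγ^m f⁻¹]` is nontrivial. -/
theorem commutator_conj_ne_one (p : ℕ) (hp : p.Prime) (n : ℕ) (hn : 1 ≤ n)
    (f : FreeGroup (Fin n ⊕ Fin n)) (hf : f ∉ Subgroup.zpowers (surfaceRel n))
    (m : ℤ) (hm : m ≠ 0) :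
    commAB (surfaceRel n ^ m) (f * surfaceRel n ^ m * f⁻¹) ≠ 1 :=
  commutator_conj_ne_one_general n hn f hf m hm
end
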